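/- Let 1 ≤ k ≤ n, let g : (ℂ^n)^4 → ℂ be quadrilinear of curvature type satisfying the Kähler-type symmetries, and let D > 0. Assume that for every k-dimensional complex subspace Σ' ⊆ ℂ^n with orthonormal basis {E'_1,…,E'_k} and every X ∈ Σ', the (real) number Σ_{i=1}^k g(X,X,E'_i,E'_i) satisfies Σ_{i=1}^k g(X,X,E'_i,E'_i) ≥ D·‖X‖². Let Σ be a k-dimensional complex subspace minimizing s among all k-dimensional complex subspaces. Then for every orthonormal basis {E_1,…,E_k} of Σ and every X ∈ ℂ^n, Σ_{i=1}^k g(E_i,E_i,X,X) ≥ (kD/(k+1)) · ‖X‖². -/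

import Mathlib

/-- `g` is quadrilinear of curvature type: linear in the first and third variables,
conjugate-linear in the second and fourth. -/
def CurvatureType {H : Type*} [AddCommGroup H] [Module ℂ H] (g : H → H → H → H → ℂ) : Prop :=
  (∀ x x' y z w, g (x + x') y z w = g x y z w + g x' y z w) ∧
  (∀ (c : ℂ) (x y z w : H), g (c • x) y z w = c * g x y z w) ∧
  (∀ x y y' z w, g x (y + y') z w = g x y z w + g x y' z w) ∧
  (∀ (c : ℂ) (x y z w : H), g x (c • y) z w = (starRingEnd ℂ) c * g x y z w) ∧
  (∀ x y z z' w, g x y (z + z') w = g x y z w + g x y z' w) ∧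
  (∀ (c : ℂ) (x y z w : H), g x y (c • z) w = c * g x y z w) ∧
  (∀ x y z w w', g x y z (w + w') = g x y z w + g x y z w') ∧
  (∀ (c : ℂ) (x y z w : H), g x y z (c • w) = (starRingEnd ℂ) c * g x y z w)

/-- The Kähler-type symmetries of a curvature-type quadrilinear map. -/
def KahlerSymmetries {H : Type*} [AddCommGroup H] [Module ℂ H] (g : H → H → H → H → ℂ) : Prop :=
  (∀ x y z w, g x y z w = g z y x w) ∧
  (∀ x y z w, g x y z w = (starRingEnd ℂ) (g y x w z))

/-!
Rotate the `ν`-th vector of a minimising frame `E` towards a vector `Z ⊥ Σ`, replacing it by the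
unit vector `r • (E ν + t • Z)`. The change of `s` is, up to the positive factor `r⁻⁴`, a quartic in
`t` without constant term, so minimality kills its linear coefficient and makes its quadratic
coefficient nonnegative. Doing the same with `I • Z`, the first condition gives
`∑ j, g (E j) (E j) Z W = 0` for all `W ∈ Σ`, and the second, summed over `ν` and combined with
`Ric_k ≥ D` on `Σ`, gives `k * D * ‖Z‖² ≤ (k + 1) * Re ∑ j, g (E j) (E j) Z Z`. For
`X = Y + Z` with `Y ∈ Σ`, `Z ⊥ Σ` the cross terms vanish and `Ric_k ≥ D` bounds the `Y`-part by
`D * ‖Y‖² ≥ k * D / (k + 1) * ‖Y‖²`.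
-/

open Function Finset
open scoped InnerProductSpace

lemma nonneg_of_forall_pos_nonneg {p : ℝ → ℝ} (hp : Continuous p) (h : ∀ t > 0, 0 ≤ p t) :
    0 ≤ p 0 :=
  ge_of_tendsto (hp.tendsto 0 |>.mono_left nhdsWithin_le_nhds)
    (eventually_nhdsWithin_of_forall (s := Set.Ioi 0) h)

lemma eq_zero_and_nonneg_of_quartic_nonneg {b c d e : ℝ}
    (h : ∀ t : ℝ, 0 ≤ b * t + c * t ^ 2 + d * t ^ 3 + e * t ^ 4) : b = 0 ∧ 0 ≤ c := by
  have hb : 0 ≤ b := by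
    simpa using nonneg_of_forall_pos_nonneg (p := fun t => b + t * (c + t * (d + t * e)))
      (by fun_prop) fun t ht => nonneg_of_mul_nonneg_right (by linear_combination h t) ht
  have hb' : 0 ≤ -b := by
    simpa using nonneg_of_forall_pos_nonneg (p := fun t => -b + t * (c + t * (-d + t * e)))
      (by fun_prop) fun t ht => nonneg_of_mul_nonneg_right (by linear_combination h (-t)) ht
  obtain rfl : b = 0 := by linarith
  refine ⟨rfl, ?_⟩
  simpa using nonneg_of_forall_pos_nonneg (p := fun t => c + t * (d + t * e))
    (by fun_prop) fun t ht => nonneg_of_mul_nonneg_right (by linear_combination h t) (pow_pos ht 2)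

section Algebra

variable {V : Type*} [AddCommGroup V] [Module ℂ V] {g : V → V → V → V → ℂ}

namespace CurvatureType

lemma apply_add_smul_ofReal_left (hg : CurvatureType g) (a b x y : V) (t : ℝ) :
    g (a + (t : ℂ) • b) (a + (t : ℂ) • b) x y =
      g a a x y + t * (g a b x y + g b a x y) + t ^ 2 * g b b x y := by
  obtain ⟨a1, m1, a2, m2, -⟩ := hg
  simp only [a1, a2, m1, m2, Complex.conj_ofReal]
  ring

lemma apply_add_smul_ofReal_right (hg : CurvatureType g) (a b x y : V) (t : ℝ) :
    g x y (a + (t : ℂ) • b) (a + (t : ℂ) • b) =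
      g x y a a + t * (g x y a b + g x y b a) + t ^ 2 * g x y b b := by
  obtain ⟨-, -, -, -, a3, m3, a4, m4⟩ := hg
  simp only [a3, a4, m3, m4, Complex.conj_ofReal]
  ring

lemma apply_smul_ofReal_left (hg : CurvatureType g) (a x y : V) (r : ℝ) :
    g ((r : ℂ) • a) ((r : ℂ) • a) x y = r ^ 2 * g a a x y := by
  rw [hg.2.1, hg.2.2.2.1, Complex.conj_ofReal]
  ring

lemma apply_smul_ofReal_right (hg : CurvatureType g) (a x y : V) (r : ℝ) :
    g x y ((r : ℂ) • a) ((r : ℂ) • a) = r ^ 2 * g x y a a := by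
  rw [hg.2.2.2.2.2.1, hg.2.2.2.2.2.2.2, Complex.conj_ofReal]
  ring

end CurvatureType

lemma KahlerSymmetries.apply_swap_pairs (hsym : KahlerSymmetries g) (a b x : V) :
    g a b x x = g x x a b := by
  obtain ⟨s1, s2⟩ := hsym
  rw [s1, s2, s1, s2, Complex.conj_conj]

variable {k : ℕ}

/-- The scalar curvature `s(Σ)` computed in the frame `e`. -/
def frameScalar (g : V → V → V → V → ℂ) (e : Fin k → V) : ℂ :=
  ∑ i, ∑ j, g (e i) (e i) (e j) (e j)

lemma frameScalar_update (hsym : KahlerSymmetries g) (e : Fin k → V) (ν : Fin k) (w : V) :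
    frameScalar g (update e ν w) =
      ∑ i ∈ {ν}ᶜ, ∑ j ∈ {ν}ᶜ, g (e i) (e i) (e j) (e j) +
        2 * ∑ j ∈ {ν}ᶜ, g (e j) (e j) w w + g w w w w := by
  have hoff : ∀ i ∈ ({ν}ᶜ : Finset (Fin k)), update e ν w i = e i := fun i hi =>
    update_of_ne (by simpa using hi) w e
  simp +contextual only [frameScalar, Fintype.sum_eq_add_sum_compl ν, update_self, hoff,
    sum_add_distrib, hsym.apply_swap_pairs w w]
  ring

end Algebra

section InnerProduct

variable {V : Type*} [NormedAddCommGroup V] [InnerProductSpace ℂ V] {g : V → V → V → V → ℂ}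
  {k : ℕ}

def firstVariation (g : V → V → V → V → ℂ) (e : Fin k → V) (ν : Fin k) (Z : V) : ℂ :=
  2 * ∑ j, (g (e j) (e j) (e ν) Z + g (e j) (e j) Z (e ν))

/-- `Z` is not normalised, whence the factor `‖Z‖ ^ 2`. -/
def secondVariation (g : V → V → V → V → ℂ) (e : Fin k → V) (ν : Fin k) (Z : V) : ℂ :=
  2 * ∑ j, g (e j) (e j) Z Z - 2 * ‖Z‖ ^ 2 * ∑ j, g (e j) (e j) (e ν) (e ν) +
    2 * g (e ν) (e ν) Z Z + g (e ν) Z (e ν) Z + g Z (e ν) Z (e ν)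

/-- When `Z ⊥ e ν`, the condition on `r` says that `r • (e ν + t • Z)` is a unit vector. -/
lemma frameScalar_update_rotate (hg : CurvatureType g) (hsym : KahlerSymmetries g)
    (e : Fin k → V) (ν : Fin k) (Z : V) :
    ∃ δ ε : ℂ, ∀ t r : ℝ, r ^ 2 * (1 + ‖Z‖ ^ 2 * t ^ 2) = 1 →
      (1 + ‖Z‖ ^ 2 * t ^ 2 : ℂ) ^ 2 *
          (frameScalar g (update e ν ((r : ℂ) • (e ν + (t : ℂ) • Z))) - frameScalar g e) =
        t * firstVariation g e ν Z + t ^ 2 * secondVariation g e ν Z + t ^ 3 * δ +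
          t ^ 4 * ε := by
  set E := e ν
  set ρ : ℂ := (‖Z‖ : ℂ) ^ 2
  have hdiff : ∀ w, frameScalar g (update e ν w) - frameScalar g e =
      2 * ∑ j ∈ {ν}ᶜ, (g (e j) (e j) w w - g (e j) (e j) E E) + (g w w w w - g E E E E) := by
    intro w
    have he := frameScalar_update hsym e ν E
    rw [update_eq_self] at he
    rw [frameScalar_update hsym, he, sum_sub_distrib]
    ring
  refine ⟨2 * ρ * ∑ j ∈ {ν}ᶜ, (g (e j) (e j) E Z + g (e j) (e j) Z E) +
      (g E Z Z Z + g Z E Z Z + g Z Z E Z + g Z Z Z E),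
    2 * ρ * ∑ j ∈ {ν}ᶜ, g (e j) (e j) Z Z + g Z Z Z Z -
      ρ ^ 2 * (2 * ∑ j ∈ {ν}ᶜ, g (e j) (e j) E E + g E E E E), fun t r hr => ?_⟩
  set G := E + (t : ℂ) • Z
  set u : ℂ := 1 + ρ * t ^ 2
  have hu : (r : ℂ) ^ 2 * u = 1 := by simpa [u, ρ] using congrArg (fun x : ℝ => (x : ℂ)) hr
  have h1 : g E Z E E = g E E E Z := hsym.apply_swap_pairs E Z E
  have h2 : g Z E E E = g E E Z E := hsym.apply_swap_pairs Z E E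
  have h3 : g E Z Z E = g Z Z E E := hsym.1 E Z Z E
  have h4 : g Z E E Z = g E E Z Z := hsym.1 Z E E Z
  have h5 : g Z Z E E = g E E Z Z := hsym.apply_swap_pairs Z Z E
  calc u ^ 2 * (frameScalar g (update e ν ((r : ℂ) • G)) - frameScalar g e)
      = u ^ 2 * (2 * (r ^ 2 * ∑ j ∈ {ν}ᶜ, g (e j) (e j) G G - ∑ j ∈ {ν}ᶜ, g (e j) (e j) E E)
          + (r ^ 2 * (r ^ 2 * g G G G G) - g E E E E)) := by
        simp only [hdiff, hg.apply_smul_ofReal_left, hg.apply_smul_ofReal_right, sum_sub_distrib,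
          ← mul_sum]
    _ = 2 * u * ∑ j ∈ {ν}ᶜ, g (e j) (e j) G G + g G G G G -
          u ^ 2 * (2 * ∑ j ∈ {ν}ᶜ, g (e j) (e j) E E + g E E E E) := by
        -- `r` disappears since `u ^ 2 * r ^ 2 = u` and `u ^ 2 * r ^ 4 = 1`
        linear_combination (2 * u * ∑ j ∈ {ν}ᶜ, g (e j) (e j) G G +
          (r ^ 2 * u + 1) * g G G G G) * hu
    _ = _ := by
        simp only [G, hg.apply_add_smul_ofReal_left, hg.apply_add_smul_ofReal_right,
          sum_add_distrib, ← mul_sum, firstVariation, secondVariation,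
          Fintype.sum_eq_add_sum_compl ν]
        rw [h1, h2, h3, h4, h5]
        ring

lemma re_firstVariation (hsym : KahlerSymmetries g) (e : Fin k → V) (ν : Fin k) (Z : V) :
    (firstVariation g e ν Z).re = 4 * (∑ j, g (e j) (e j) Z (e ν)).re := by
  simp only [firstVariation, fun j => hsym.2 (e j) (e j) (e ν) Z, Complex.mul_re,
    Complex.re_sum, Complex.add_re, Complex.conj_re, sum_add_distrib, Complex.re_ofNat,
    Complex.im_ofNat, zero_mul, sub_zero]
  ring

lemma secondVariation_add_secondVariation_I_smul (hg : CurvatureType g) (e : Fin k → V)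
    (ν : Fin k) (Z : V) :
    secondVariation g e ν Z + secondVariation g e ν (Complex.I • Z) =
      4 * (∑ j, g (e j) (e j) Z Z - ‖Z‖ ^ 2 * ∑ j, g (e j) (e j) (e ν) (e ν) +
        g (e ν) (e ν) Z Z) := by
  obtain ⟨-, m1, -, m2, -, m3, -, m4⟩ := hg
  simp only [secondVariation, m1, m2, m3, m4, norm_smul, Complex.norm_I, one_mul,
    Complex.conj_I]
  simp only [← mul_assoc, neg_mul, mul_neg, Complex.I_mul_I, neg_neg, one_mul]
  ring

lemma Orthonormal.update_of_inner_eq_zero {ι : Type*} [DecidableEq ι] {e : ι → V}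
    (he : Orthonormal ℂ e) {ν : ι} {w : V} (hw : ‖w‖ = 1) (hwe : ∀ i ≠ ν, ⟪e i, w⟫_ℂ = 0) :
    Orthonormal ℂ (update e ν w) := by
  rw [orthonormal_iff_ite] at he ⊢
  intro i j
  rcases eq_or_ne i ν with rfl | hi <;> rcases eq_or_ne j i with rfl | hj
  · simp [inner_self_eq_norm_sq_to_K, hw]
  · rw [update_self, update_of_ne hj, if_neg hj.symm, ← inner_conj_symm, hwe j hj, map_zero]
  · rw [update_of_ne hi, he]
  · rcases eq_or_ne j ν with rfl | hjν
    · rw [update_self, update_of_ne hi, hwe i hi, if_neg hi]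
    · rw [update_of_ne hi, update_of_ne hjν, he]

lemma Orthonormal.update_rotate {ι : Type*} [DecidableEq ι] {e : ι → V} (he : Orthonormal ℂ e)
    (ν : ι) {Z : V}
    (hZ : ∀ i, ⟪e i, Z⟫_ℂ = 0) {t r : ℝ} (hr : r ^ 2 * (1 + ‖Z‖ ^ 2 * t ^ 2) = 1) :
    Orthonormal ℂ (update e ν ((r : ℂ) • (e ν + (t : ℂ) • Z))) := by
  refine he.update_of_inner_eq_zero ?_ fun i hi => ?_
  · have hpyth := norm_add_sq_eq_norm_sq_add_norm_sq_of_inner_eq_zero (e ν) ((t : ℂ) • Z)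
      (by rw [inner_smul_right, hZ, mul_zero])
    rw [he.1 ν, norm_smul, Complex.norm_real, Real.norm_eq_abs] at hpyth
    rw [norm_smul, Complex.norm_real, Real.norm_eq_abs,
      ← pow_eq_one_iff_of_nonneg (by positivity) two_ne_zero, mul_pow, sq_abs]
    linear_combination hr + r ^ 2 * hpyth + r ^ 2 * ‖Z‖ ^ 2 * sq_abs t
  · rw [inner_smul_right, inner_add_right, inner_smul_right, hZ, he.inner_eq_zero hi]
    simp

lemma Orthonormal.exists_orthonormalBasis_span {ι : Type*} [Fintype ι] {F : ι → V} (hF : Orthonormal ℂ F) :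
    ∃ B : OrthonormalBasis ι ℂ (Submodule.span ℂ (Set.range F)), ∀ i, (B i : V) = F i := by
  set b := Module.Basis.span hF.linearIndependent
  have hb : Orthonormal ℂ b := (Submodule.subtypeₗᵢ _).orthonormal_comp_iff.1 <| by
    simpa [Function.comp_def, b, Module.Basis.span_apply] using hF
  exact ⟨b.toOrthonormalBasis hb, fun i => by simp [b, Module.Basis.span_apply]⟩

lemma OrthonormalBasis.mem_span_range_coe {ι : Type*} [Fintype ι] {P : Submodule ℂ V}
    (E : OrthonormalBasis ι ℂ P) {Y : V} (hY : Y ∈ P) : Y ∈ Submodule.span ℂ (Set.range fun i => (E i : V)) :=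
  Submodule.mem_span_range_iff_exists_fun ℂ |>.2
    ⟨fun i => ⟪(E i : V), Y⟫_ℂ, by simpa using congrArg Subtype.val (E.sum_repr' ⟨Y, hY⟩)⟩

def IsMinimalFrame (g : V → V → V → V → ℂ) (e : Fin k → V) : Prop :=
  ∀ F : Fin k → V, Orthonormal ℂ F → (frameScalar g e).re ≤ (frameScalar g F).re

namespace IsMinimalFrame

variable {e : Fin k → V} (hg : CurvatureType g) (hsym : KahlerSymmetries g)
  (he : Orthonormal ℂ e) (hmin : IsMinimalFrame g e)
include hg hsym he hmin

lemma re_variations {Z : V} (hZ : ∀ i, ⟪e i, Z⟫_ℂ = 0) (ν : Fin k) :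
    (firstVariation g e ν Z).re = 0 ∧ 0 ≤ (secondVariation g e ν Z).re := by
  obtain ⟨δ, ε, hrot⟩ := frameScalar_update_rotate hg hsym e ν Z
  refine eq_zero_and_nonneg_of_quartic_nonneg (d := δ.re) (e := ε.re) fun t => ?_
  set r := (√(1 + ‖Z‖ ^ 2 * t ^ 2))⁻¹
  have hr : r ^ 2 * (1 + ‖Z‖ ^ 2 * t ^ 2) = 1 := by
    rw [inv_pow, Real.sq_sqrt (by positivity), inv_mul_cancel₀ (by positivity)]
  have hle := hmin _ (he.update_rotate ν hZ hr)
  have key := congrArg Complex.re (hrot t r hr)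
  simp only [← Complex.ofReal_pow, ← Complex.ofReal_one, ← Complex.ofReal_mul,
    ← Complex.ofReal_add, Complex.re_ofReal_mul, Complex.add_re, Complex.sub_re] at key
  linarith [mul_nonneg (sq_nonneg (1 + ‖Z‖ ^ 2 * t ^ 2)) (sub_nonneg.2 hle)]

/-- The first variations along `Z` and `I • Z` are `4 * re` and `-4 * im` of the sum. -/
lemma sum_apply_eq_zero {Z : V} (hZ : ∀ i, ⟪e i, Z⟫_ℂ = 0) (ν : Fin k) :
    ∑ j, g (e j) (e j) Z (e ν) = 0 := by
  have hIZ : ∀ i, ⟪e i, Complex.I • Z⟫_ℂ = 0 := fun i => by rw [inner_smul_right, hZ, mul_zero]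
  have hre := (hmin.re_variations hg hsym he hZ ν).1
  have him := (hmin.re_variations hg hsym he hIZ ν).1
  simp only [re_firstVariation hsym, hg.2.2.2.2.2.1, ← mul_sum, Complex.mul_re, Complex.I_re,
    Complex.I_im] at hre him
  apply Complex.ext <;> simp only [Complex.zero_re, Complex.zero_im] <;> linarith

lemma sum_apply_eq_zero_of_mem_span {Z : V} (hZ : ∀ i, ⟪e i, Z⟫_ℂ = 0) {W : V}
    (hW : W ∈ Submodule.span ℂ (Set.range e)) : ∑ j, g (e j) (e j) Z W = 0 := by
  induction hW using Submodule.span_induction with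
  | mem W hW =>
    obtain ⟨ν, rfl⟩ := hW
    exact hmin.sum_apply_eq_zero hg hsym he hZ ν
  | zero => exact sum_eq_zero fun j _ => by simpa using hg.2.2.2.2.2.2.2 0 (e j) (e j) Z 0
  | add W W' _ _ hW hW' => simp only [hg.2.2.2.2.2.2.1, sum_add_distrib, hW, hW', add_zero]
  | smul c W _ hW => simp only [hg.2.2.2.2.2.2.2, ← mul_sum, hW, mul_zero]

lemma norm_sq_mul_re_sum_le {Z : V} (hZ : ∀ i, ⟪e i, Z⟫_ℂ = 0) (ν : Fin k) :
    ‖Z‖ ^ 2 * (∑ j, g (e j) (e j) (e ν) (e ν)).re ≤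
      (∑ j, g (e j) (e j) Z Z).re + (g (e ν) (e ν) Z Z).re := by
  have hIZ : ∀ i, ⟪e i, Complex.I • Z⟫_ℂ = 0 := fun i => by rw [inner_smul_right, hZ, mul_zero]
  have h := congrArg Complex.re (secondVariation_add_secondVariation_I_smul hg e ν Z)
  simp only [Complex.add_re, Complex.sub_re, Complex.mul_re, Complex.re_ofNat, Complex.im_ofNat,
    ← Complex.ofReal_pow, Complex.ofReal_re, Complex.ofReal_im, zero_mul, sub_zero] at h
  linarith [(hmin.re_variations hg hsym he hZ ν).2, (hmin.re_variations hg hsym he hIZ ν).2]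

lemma mul_norm_sq_le_re_sum {D : ℝ} (hD : ∀ ν, D ≤ (∑ j, g (e j) (e j) (e ν) (e ν)).re) {Z : V}
    (hZ : ∀ i, ⟪e i, Z⟫_ℂ = 0) :
    k * D * ‖Z‖ ^ 2 ≤ (k + 1) * (∑ j, g (e j) (e j) Z Z).re := by
  have hsum := sum_le_sum fun ν (_ : ν ∈ univ) => hmin.norm_sq_mul_re_sum_le hg hsym he hZ ν
  have hDsum := sum_le_sum fun ν (_ : ν ∈ univ) =>
    mul_le_mul_of_nonneg_left (hD ν) (sq_nonneg ‖Z‖)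
  simp only [sum_add_distrib, ← Complex.re_sum, sum_const, card_univ, Fintype.card_fin,
    nsmul_eq_mul] at hsum hDsum
  linarith

end IsMinimalFrame

theorem IsMinimalFrame.mul_norm_add_sq_le_re_sum (hg : CurvatureType g)
    (hsym : KahlerSymmetries g) {P : Submodule ℂ V} (E : OrthonormalBasis (Fin k) ℂ P)
    (hmin : IsMinimalFrame g fun i => (E i : V)) {D : ℝ} (hD : 0 ≤ D)
    (hric : ∀ Y ∈ P, D * ‖Y‖ ^ 2 ≤ (∑ j, g (E j) (E j) Y Y).re) {Y Z : V} (hY : Y ∈ P)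
    (hZ : Z ∈ Pᗮ) :
    k * D / (k + 1) * ‖Y + Z‖ ^ 2 ≤ (∑ j, g (E j) (E j) (Y + Z) (Y + Z)).re := by
  have he : Orthonormal ℂ fun i => (E i : V) := E.orthonormal.comp_linearIsometry P.subtypeₗᵢ
  have hZe : ∀ i, ⟪(E i : V), Z⟫_ℂ = 0 := fun i =>
    Submodule.inner_right_of_mem_orthogonal (E i).2 hZ
  have hZY := hmin.sum_apply_eq_zero_of_mem_span hg hsym he hZe (E.mem_span_range_coe hY)
  have hYZ : ∑ j, g (E j) (E j) Y Z = 0 := by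
    rw [sum_congr rfl fun j _ => hsym.2 (E j) (E j) Y Z, ← map_sum, hZY, map_zero]
  have hsplit : ∑ j, g (E j) (E j) (Y + Z) (Y + Z) =
      ∑ j, g (E j) (E j) Y Y + ∑ j, g (E j) (E j) Z Z := by
    simp only [hg.2.2.2.2.1, hg.2.2.2.2.2.2.1, sum_add_distrib, hZY, hYZ]
    ring
  have hnorm : ‖Y + Z‖ ^ 2 = ‖Y‖ ^ 2 + ‖Z‖ ^ 2 := by
    simpa [sq] using norm_add_sq_eq_norm_sq_add_norm_sq_of_inner_eq_zero Y Z
      (Submodule.inner_right_of_mem_orthogonal hY hZ)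
  have hZbound := hmin.mul_norm_sq_le_re_sum hg hsym he
    (fun ν => by simpa [he.1 ν] using hric _ (E ν).2) hZe
  have hcoef : k * D / (k + 1) ≤ D := div_le_of_le_mul₀ (by positivity) hD (by linarith)
  have hZcoef : k * D / (k + 1) * ‖Z‖ ^ 2 ≤ (∑ j, g (E j) (E j) Z Z).re := by
    rw [div_mul_eq_mul_div, div_le_iff₀ (by positivity)]
    linarith
  rw [hnorm, hsplit, Complex.add_re, mul_add]
  linarith [hric Y hY, mul_le_mul_of_nonneg_right hcoef (sq_nonneg ‖Y‖)]

end InnerProduct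

theorem stmt_14_general (n k : ℕ)
    (g : EuclideanSpace ℂ (Fin n) → EuclideanSpace ℂ (Fin n) → EuclideanSpace ℂ (Fin n) →
      EuclideanSpace ℂ (Fin n) → ℂ)
    (hg : CurvatureType g) (hsym : KahlerSymmetries g)
    (D : ℝ) (hD : 0 < D)
    (hric : ∀ (Q : Submodule ℂ (EuclideanSpace ℂ (Fin n))),
      Module.finrank ℂ Q = k → ∀ (E' : OrthonormalBasis (Fin k) ℂ Q)
        (X : EuclideanSpace ℂ (Fin n)), X ∈ Q →
        D * ‖X‖ ^ 2 ≤ (∑ i : Fin k, g X X (E' i) (E' i)).re)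
    (P : Submodule ℂ (EuclideanSpace ℂ (Fin n)))
    (hmin :
      ∀ (E : OrthonormalBasis (Fin k) ℂ P) (Q : Submodule ℂ (EuclideanSpace ℂ (Fin n))),
        Module.finrank ℂ Q = k → ∀ E' : OrthonormalBasis (Fin k) ℂ Q,
        (∑ i : Fin k, ∑ j : Fin k, g (E i) (E i) (E j) (E j)).re ≤
          (∑ i : Fin k, ∑ j : Fin k, g (E' i) (E' i) (E' j) (E' j)).re)
    (E : OrthonormalBasis (Fin k) ℂ P) (X : EuclideanSpace ℂ (Fin n)) :
    ((k : ℝ) * D / ((k : ℝ) + 1)) * ‖X‖ ^ 2 ≤ (∑ i : Fin k, g (E i) (E i) X X).re := by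
  have hP : Module.finrank ℂ P = k := by simpa using Module.finrank_eq_card_basis E.toBasis
  have hEmin : IsMinimalFrame g fun i => (E i : EuclideanSpace ℂ (Fin n)) := fun F hF => by
    obtain ⟨B, hB⟩ := hF.exists_orthonormalBasis_span
    simpa [frameScalar, hB] using
      hmin E _ (by simpa using Module.finrank_eq_card_basis B.toBasis) B
  have hricP : ∀ Y ∈ P, D * ‖Y‖ ^ 2 ≤ (∑ j, g (E j) (E j) Y Y).re := fun Y hY => by
    rw [sum_congr rfl fun j _ => (hsym.apply_swap_pairs Y Y (E j)).symm]
    exact hric P hP E Y hY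
  simpa using hEmin.mul_norm_add_sq_le_re_sum hg hsym E hD.le hricP
    (P.starProjection_apply_mem X) (P.sub_starProjection_mem_orthogonal X)

/-- pointwise core of the uniform RC `k`-positivity theorem. If
`Ric_k ≥ D > 0`, i.e. `Σ_i g(X,X,E'_i,E'_i) ≥ D‖X‖²` for every `k`-dimensional subspace with
orthonormal basis `{E'_i}` and every `X` in it, and `P` is a `k`-dimensional subspace
minimizing `s`, then for every orthonormal basis `{E_i}` of `P` and every `X ∈ ℂ^n`,
`Σ_i g(E_i,E_i,X,X) ≥ (kD/(k+1))·‖X‖²`. -/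
theorem stmt_14 (n k : ℕ) (hk : 1 ≤ k) (hkn : k ≤ n)
    (g : EuclideanSpace ℂ (Fin n) → EuclideanSpace ℂ (Fin n) → EuclideanSpace ℂ (Fin n) →
      EuclideanSpace ℂ (Fin n) → ℂ)
    (hg : CurvatureType g) (hsym : KahlerSymmetries g)
    (D : ℝ) (hD : 0 < D)
    (hric : ∀ (Q : Submodule ℂ (EuclideanSpace ℂ (Fin n))),
      Module.finrank ℂ Q = k → ∀ (E' : OrthonormalBasis (Fin k) ℂ Q)
        (X : EuclideanSpace ℂ (Fin n)), X ∈ Q →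
        D * ‖X‖ ^ 2 ≤ (∑ i : Fin k, g X X (E' i) (E' i)).re)
    (P : Submodule ℂ (EuclideanSpace ℂ (Fin n))) (hP : Module.finrank ℂ P = k)
    (hmin :
      ∀ (E : OrthonormalBasis (Fin k) ℂ P) (Q : Submodule ℂ (EuclideanSpace ℂ (Fin n))),
        Module.finrank ℂ Q = k → ∀ E' : OrthonormalBasis (Fin k) ℂ Q,
        (∑ i : Fin k, ∑ j : Fin k, g (E i) (E i) (E j) (E j)).re ≤
          (∑ i : Fin k, ∑ j : Fin k, g (E' i) (E' i) (E' j) (E' j)).re)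
    (E : OrthonormalBasis (Fin k) ℂ P) (X : EuclideanSpace ℂ (Fin n)) :
    ((k : ℝ) * D / ((k : ℝ) + 1)) * ‖X‖ ^ 2 ≤ (∑ i : Fin k, g (E i) (E i) X X).re :=
  stmt_14_general n k g hg hsym D hD hric P hmin E X
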